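/- arXiv:1909.01631 — 11 statements merged into one kernel-verified Lean document; each statement's English description precedes it below -/
import Mathlib

section
/- Let X be a compact ordered space and let r be an equivalence co-relation on X. If r (Sum.inl x) (Sum.inr y) holds for x, y ∈ X, then there exists z ∈ X with x ≤ z, z ≤ y, r (Sum.inl z) (Sum.inr z) and r (Sum.inr z) (Sum.inl z). (This is the order-theoretic form of the paper's main theorem that every equivalence relation in the dual of the category of compact ordered spaces is effective.) -/
/-- An equivalence co-relation on a compact ordered space `X`: a reflexive transitive
relation on `X ⊕ X` with closed graph, containing the coproduct order, and satisfying
co-reflexivity, co-symmetry and co-transitivity. -/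
structure IsEquivCoRel {X : Type*} [TopologicalSpace X] [PartialOrder X]
    (r : X ⊕ X → X ⊕ X → Prop) : Prop where
  refl : ∀ a, r a a
  trans : ∀ a b c, r a b → r b c → r a c
  isClosed : IsClosed {p : (X ⊕ X) × (X ⊕ X) | r p.1 p.2}
  le_rel : ∀ a b : X ⊕ X, Sum.LiftRel (· ≤ ·) (· ≤ ·) a b → r a b
  corefl : ∀ a b, r a b → Sum.elim id id a ≤ Sum.elim id id b
  cosymm : ∀ a b, r a b → r a.swap b.swap
  cotrans_lr : ∀ x y : X, r (Sum.inl x) (Sum.inr y) →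
      ∃ z, r (Sum.inl x) (Sum.inr z) ∧ r (Sum.inl z) (Sum.inr y)
  cotrans_rl : ∀ x y : X, r (Sum.inr x) (Sum.inl y) →
      ∃ z, r (Sum.inr x) (Sum.inl z) ∧ r (Sum.inr z) (Sum.inl y)

/-- Every equivalence relation in the dual of compact ordered spaces is effective
(order-theoretic form): if `r (inl x) (inr y)`, then there is `z` with
`x ≤ z ≤ y` and `(z,0) ∼ (z,1)`. -/
theorem effective_of_isEquivCoRel {X : Type*} [TopologicalSpace X] [CompactSpace X]
    [PartialOrder X] [OrderClosedTopology X] {r : X ⊕ X → X ⊕ X → Prop}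
    (hr : IsEquivCoRel r) {x y : X} (hxy : r (Sum.inl x) (Sum.inr y)) :
    ∃ z : X, x ≤ z ∧ z ≤ y ∧ r (Sum.inl z) (Sum.inr z) ∧ r (Sum.inr z) (Sum.inl z) := by
  classical
  set R : X → X → Prop := fun a b => r (Sum.inl a) (Sum.inr b) with hRdef
  have Rle : ∀ {a b}, R a b → a ≤ b := fun {a b} h => hr.corefl _ _ h
  have Rmono : ∀ {a a' b b'}, a' ≤ a → R a b → b ≤ b' → R a' b' := by
    intro a a' b b' h1 h2 h3
    exact hr.trans _ _ _ (hr.le_rel _ _ (Sum.LiftRel.inl h1))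
      (hr.trans _ _ _ h2 (hr.le_rel _ _ (Sum.LiftRel.inr h3)))
  have Rclosed : IsClosed {p : X × X | R p.1 p.2} := by
    have hc : Continuous (fun p : X × X => ((Sum.inl p.1 : X ⊕ X), (Sum.inr p.2 : X ⊕ X))) :=
      (continuous_inl.comp continuous_fst).prodMk (continuous_inr.comp continuous_snd)
    exact hr.isClosed.preimage hc
  have Rclosed1 : ∀ a : X, IsClosed {b : X | R a b} := by
    intro a
    have := Rclosed.preimage (continuous_const.prodMk continuous_id : Continuous fun b : X => (a, b))
    simpa using this
  have Rclosed2 : ∀ b : X, IsClosed {a : X | R a b} := by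
    intro b
    have := Rclosed.preimage (continuous_id.prodMk continuous_const : Continuous fun a : X => (a, b))
    simpa using this
  -- the collection of nonempty closed sets on which `R` has "successors"
  set S : Set (Set X) := {K | K.Nonempty ∧ IsClosed K ∧ ∀ a ∈ K, ∃ b ∈ K, R a b} with hSdef
  set K₀ : Set X := {z | R x z ∧ R z y} with hK₀
  have hK₀S : K₀ ∈ S := by
    refine ⟨?_, ?_, ?_⟩
    · obtain ⟨c, h1, h2⟩ := hr.cotrans_lr x y hxy
      exact ⟨c, h1, h2⟩
    · exact (Rclosed1 x).inter (Rclosed2 y)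
    · rintro a ⟨hxa, hay⟩
      obtain ⟨c, h1, h2⟩ := hr.cotrans_lr a y hay
      exact ⟨c, ⟨Rmono (Rle hxa) h1 le_rfl, h2⟩, h1⟩
  have hlb : ∀ c ⊆ S, IsChain (· ⊆ ·) c → c.Nonempty → ∃ lb ∈ S, ∀ s ∈ c, lb ⊆ s := by
    intro c hcS hchain hcne
    refine ⟨⋂₀ c, ⟨?_, ?_, ?_⟩, fun s hs => Set.sInter_subset_of_mem hs⟩
    · haveI : Nonempty c := hcne.to_subtype
      exact IsCompact.nonempty_sInter_of_directed_nonempty_isCompact_isClosed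
        (fun U hU V hV => by
          rcases hchain.total hU hV with h | h
          · exact ⟨U, hU, Set.Subset.rfl, h⟩
          · exact ⟨V, hV, h, Set.Subset.rfl⟩)
        (fun U hU => (hcS hU).1) (fun U hU => (hcS hU).2.1.isCompact)
        (fun U hU => (hcS hU).2.1)
    · exact isClosed_sInter fun U hU => (hcS hU).2.1
    · intro a ha
      set B : Set (Set X) := (fun K => {b ∈ K | R a b}) '' c with hB
      haveI : Nonempty B := (hcne.image _).to_subtype
      have hBne : (⋂₀ B).Nonempty := by
        refine IsCompact.nonempty_sInter_of_directed_nonempty_isCompact_isClosed ?_ ?_ ?_ ?_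
        · rintro _ ⟨U, hU, rfl⟩ _ ⟨V, hV, rfl⟩
          rcases hchain.total hU hV with h | h
          · exact ⟨_, ⟨U, hU, rfl⟩, Set.Subset.rfl, fun b hb => ⟨h hb.1, hb.2⟩⟩
          · exact ⟨_, ⟨V, hV, rfl⟩, fun b hb => ⟨h hb.1, hb.2⟩, Set.Subset.rfl⟩
        · rintro _ ⟨U, hU, rfl⟩
          exact (hcS hU).2.2 a (ha U hU)
        · rintro _ ⟨U, hU, rfl⟩
          exact ((hcS hU).2.1.inter (Rclosed1 a)).isCompact
        · rintro _ ⟨U, hU, rfl⟩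
          exact (hcS hU).2.1.inter (Rclosed1 a)
      obtain ⟨b, hb⟩ := hBne
      refine ⟨b, fun U hU => (hb _ ⟨U, hU, rfl⟩).1, ?_⟩
      obtain ⟨U, hU⟩ := hcne
      exact (hb _ ⟨U, hU, rfl⟩).2

  obtain ⟨m, hmK₀, hmS, hmin⟩ := zorn_superset_nonempty S hlb K₀ hK₀S
  obtain ⟨hmne, hmcl, hmsucc⟩ := hmS
  -- every element of `m` is below every element of `m`
  have key : ∀ a ∈ m, ∀ b ∈ m, a ≤ b := by
    intro a ha
    set m' : Set X := {b ∈ m | a ≤ b} with hm'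
    have hm'S : m' ∈ S := by
      refine ⟨?_, hmcl.inter (isClosed_le continuous_const continuous_id), ?_⟩
      · obtain ⟨b, hb, hab⟩ := hmsucc a ha
        exact ⟨b, hb, Rle hab⟩
      · rintro b ⟨hbm, hab⟩
        obtain ⟨c, hc, hbc⟩ := hmsucc b hbm
        exact ⟨c, ⟨hc, le_trans hab (Rle hbc)⟩, hbc⟩
    have : m' = m := Set.Subset.antisymm (fun b hb => hb.1) (hmin hm'S (fun b hb => hb.1))
    intro b hb
    rw [← this] at hb
    exact hb.2
  obtain ⟨z, hz⟩ := hmne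
  obtain ⟨b, hb, hzb⟩ := hmsucc z hz
  have hbz : b = z := le_antisymm (key b hb z hz) (key z hz b hb)
  subst hbz
  have hzK₀ := hmK₀ hz
  have hswap := hr.cosymm _ _ hzb
  exact ⟨b, Rle hzK₀.1, Rle hzK₀.2, hzb, hswap⟩
end

section
/- Let X be a compact ordered space and let Y ⊆ X be a closed subset. Then the relation ≼^Y on X ⊕ X is an equivalence co-relation on X; that is, it is a reflexive transitive relation whose graph is closed in (X ⊕ X) × (X ⊕ X), it contains the coproduct order, and it satisfies co-reflexivity, co-symmetry and co-transitivity. -/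
/-- The relation `≼^Y` on `X ⊕ X` associated with a subset `Y ⊆ X`. -/
def preY {X : Type*} [LE X] (Y : Set X) : X ⊕ X → X ⊕ X → Prop
  | Sum.inl x, Sum.inl y => x ≤ y
  | Sum.inr x, Sum.inr y => x ≤ y
  | Sum.inl x, Sum.inr y => ∃ z ∈ Y, x ≤ z ∧ z ≤ y
  | Sum.inr x, Sum.inl y => ∃ z ∈ Y, x ≤ z ∧ z ≤ y

/-- For a closed subset `Y` of a compact ordered space `X`, the relation `≼^Y` is an
equivalence co-relation on `X`. -/
theorem isEquivCoRel_preY {X : Type*} [TopologicalSpace X] [CompactSpace X]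
    [PartialOrder X] [OrderClosedTopology X] {Y : Set X} (hY : IsClosed Y) :
    IsEquivCoRel (preY Y) := by
  have hL : IsCompact {p : X × X | p.1 ≤ p.2} :=
    (isClosed_le continuous_fst continuous_snd).isCompact
  have hK : IsCompact {q : (X × X) × X | q.1.2 ∈ Y ∧ q.1.1 ≤ q.1.2 ∧ q.1.2 ≤ q.2} := by
    refine IsClosed.isCompact ?_
    refine IsClosed.inter (hY.preimage (by fun_prop)) (IsClosed.inter ?_ ?_)
    · exact isClosed_le (by fun_prop) (by fun_prop)
    · exact isClosed_le (by fun_prop) (by fun_prop)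
  have hM : IsCompact {p : X × X | ∃ z ∈ Y, p.1 ≤ z ∧ z ≤ p.2} := by
    have := hK.image (f := fun q => (q.1.1, q.2)) (by fun_prop)
    convert this using 1
    ext ⟨x, y⟩
    constructor
    · rintro ⟨z, hz, h1, h2⟩; exact ⟨((x, z), y), ⟨hz, h1, h2⟩, rfl⟩
    · rintro ⟨⟨⟨a, z⟩, b⟩, ⟨hz, h1, h2⟩, h⟩
      obtain ⟨rfl, rfl⟩ := Prod.mk.injEq .. ▸ h
      exact ⟨z, hz, h1, h2⟩
  constructor
  · rintro (a | a) <;> exact le_refl a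
  · rintro (a | a) (b | b) (c | c) hab hbc
    · exact le_trans hab hbc
    · obtain ⟨z, hz, h1, h2⟩ := hbc; exact ⟨z, hz, le_trans hab h1, h2⟩
    · obtain ⟨z, hz, h1, h2⟩ := hab; obtain ⟨w, hw, h3, h4⟩ := hbc
      exact le_trans h1 (le_trans h2 (le_trans h3 h4))
    · obtain ⟨z, hz, h1, h2⟩ := hab; exact ⟨z, hz, h1, le_trans h2 hbc⟩
    · obtain ⟨z, hz, h1, h2⟩ := hab; exact ⟨z, hz, h1, le_trans h2 hbc⟩
    · obtain ⟨z, hz, h1, h2⟩ := hab; obtain ⟨w, hw, h3, h4⟩ := hbc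
      exact le_trans h1 (le_trans h2 (le_trans h3 h4))
    · obtain ⟨z, hz, h1, h2⟩ := hbc; exact ⟨z, hz, le_trans hab h1, h2⟩
    · exact le_trans hab hbc
  · have key : {p : (X ⊕ X) × (X ⊕ X) | preY Y p.1 p.2} =
        (Prod.map Sum.inl Sum.inl '' {p : X × X | p.1 ≤ p.2}) ∪
        (Prod.map Sum.inr Sum.inr '' {p : X × X | p.1 ≤ p.2}) ∪
        (Prod.map Sum.inl Sum.inr '' {p : X × X | ∃ z ∈ Y, p.1 ≤ z ∧ z ≤ p.2}) ∪
        (Prod.map Sum.inr Sum.inl '' {p : X × X | ∃ z ∈ Y, p.1 ≤ z ∧ z ≤ p.2}) := by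
      ext ⟨a | a, b | b⟩ <;>
        simp [preY, Prod.map, Prod.ext_iff]
    rw [key]
    exact (((((hL.image (continuous_inl.prodMap continuous_inl)).union
      (hL.image (continuous_inr.prodMap continuous_inr))).union
      (hM.image (continuous_inl.prodMap continuous_inr))).union
      (hM.image (continuous_inr.prodMap continuous_inl)))).isClosed
  · rintro a b (h | h)
    · exact h
    · exact h
  · rintro (a | a) (b | b) h
    · exact h
    · obtain ⟨z, _, h1, h2⟩ := h; exact le_trans h1 h2
    · obtain ⟨z, _, h1, h2⟩ := h; exact le_trans h1 h2
    · exact h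
  · rintro (a | a) (b | b) h <;> exact h
  · rintro x y ⟨z, hz, h1, h2⟩
    exact ⟨z, ⟨z, hz, h1, le_refl z⟩, ⟨z, hz, le_refl z, h2⟩⟩
  · rintro x y ⟨z, hz, h1, h2⟩
    exact ⟨z, ⟨z, hz, h1, le_refl z⟩, ⟨z, hz, le_refl z, h2⟩⟩
end

section
/- Let X be a compact ordered space and let r be an equivalence co-relation on X. Then the set Φ(r) = {z : X | r (Sum.inl z) (Sum.inr z) ∧ r (Sum.inr z) (Sum.inl z)} is closed in X, and r coincides with the relation ≼^{Φ(r)}: for all a, b ∈ X ⊕ X, r a b holds if and only if a ≼^{Φ(r)} b. -/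
set_option linter.unusedSectionVars false

lemma exists_maximal_of_isCompact {X : Type*} [TopologicalSpace X] [PartialOrder X]
    [ClosedIciTopology X] {T : Set X} (hT : IsCompact T) (hTc : IsClosed T) {x : X}
    (hx : x ∈ T) : ∃ m, x ≤ m ∧ Maximal (· ∈ T) m := by
  apply zorn_le_nonempty₀ T ?_ x hx
  intro c hcT hc y hy
  have : Nonempty c := ⟨⟨y, hy⟩⟩
  have hne : (⋂ a : c, T ∩ Set.Ici (a : X)).Nonempty := by
    apply IsCompact.nonempty_iInter_of_directed_nonempty_isCompact_isClosed
    · rintro ⟨a, ha⟩ ⟨b, hb⟩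
      rcases hc.total ha hb with h | h
      · exact ⟨⟨b, hb⟩, Set.inter_subset_inter_right _ (Set.Ici_subset_Ici.2 h),
          subset_rfl⟩
      · exact ⟨⟨a, ha⟩, subset_rfl,
          Set.inter_subset_inter_right _ (Set.Ici_subset_Ici.2 h)⟩
    · rintro ⟨a, ha⟩; exact ⟨a, hcT ha, le_rfl⟩
    · rintro ⟨a, ha⟩; exact hT.inter_right isClosed_Ici
    · rintro ⟨a, ha⟩; exact hTc.inter isClosed_Ici
  obtain ⟨z, hz⟩ := hne
  simp only [Set.mem_iInter, Set.mem_inter_iff] at hz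
  exact ⟨z, (hz ⟨y, hy⟩).1, fun a ha => (hz ⟨a, ha⟩).2⟩


section Key
variable {X : Type*} [TopologicalSpace X] [CompactSpace X]
    [PartialOrder X] [OrderClosedTopology X] {r : X ⊕ X → X ⊕ X → Prop}

lemma rel_closed_lr (hr : IsEquivCoRel r) (x y : X) :
    IsClosed {z : X | r (Sum.inl x) (Sum.inr z) ∧ r (Sum.inl z) (Sum.inr y)} := by
  have h1 : IsClosed {z : X | r (Sum.inl x) (Sum.inr z)} :=
    hr.isClosed.preimage (continuous_const.prodMk continuous_inr)
  have h2 : IsClosed {z : X | r (Sum.inl z) (Sum.inr y)} :=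
    hr.isClosed.preimage ((continuous_inl).prodMk continuous_const)
  exact h1.inter h2

lemma corefl' (hr : IsEquivCoRel r) {x y : X} (h : r (Sum.inl x) (Sum.inr y)) : x ≤ y :=
  hr.corefl _ _ h

lemma key (hr : IsEquivCoRel r) {x y : X} (h : r (Sum.inl x) (Sum.inr y)) :
    ∃ z, r (Sum.inl z) (Sum.inr z) ∧ x ≤ z ∧ z ≤ y := by
  obtain ⟨z₀, hz₀⟩ := hr.cotrans_lr x y h
  have hTc := rel_closed_lr hr x y
  obtain ⟨m, -, hmT, hmax⟩ := exists_maximal_of_isCompact hTc.isCompact hTc hz₀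
  obtain ⟨w, hw1, hw2⟩ := hr.cotrans_lr m y hmT.2
  have hmw : m ≤ w := corefl' hr hw1
  have hwT : w ∈ {z : X | r (Sum.inl x) (Sum.inr z) ∧ r (Sum.inl z) (Sum.inr y)} :=
    ⟨hr.trans _ _ _ hmT.1 (hr.le_rel _ _ (Sum.LiftRel.inr hmw)), hw2⟩
  have hwm : w = m := le_antisymm (hmax hwT hmw) hmw
  subst hwm
  exact ⟨w, hw1, corefl' hr hmT.1, corefl' hr hmT.2⟩

end Key

/-- For an equivalence co-relation `r` on `X`, the set `Φ(r)` is closed and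
`r` coincides with `≼^{Φ(r)}`. -/
theorem isClosed_phi_and_eq_preY_phi {X : Type*} [TopologicalSpace X] [CompactSpace X]
    [PartialOrder X] [OrderClosedTopology X] {r : X ⊕ X → X ⊕ X → Prop}
    (hr : IsEquivCoRel r) :
    IsClosed {z : X | r (Sum.inl z) (Sum.inr z) ∧ r (Sum.inr z) (Sum.inl z)} ∧
      ∀ a b : X ⊕ X,
        r a b ↔ preY {z : X | r (Sum.inl z) (Sum.inr z) ∧ r (Sum.inr z) (Sum.inl z)} a b := by
  constructor
  · exact (hr.isClosed.preimage (continuous_inl.prodMk continuous_inr)).inter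
      (hr.isClosed.preimage (continuous_inr.prodMk continuous_inl))
  · rintro (x | x) (y | y)
    · exact ⟨fun h => hr.corefl _ _ h, fun h => hr.le_rel _ _ (Sum.LiftRel.inl h)⟩
    · constructor
      · intro h
        obtain ⟨z, h1, h2, h3⟩ := key hr h
        exact ⟨z, ⟨h1, hr.cosymm _ _ h1⟩, h2, h3⟩
      · rintro ⟨z, ⟨h1, -⟩, h2, h3⟩
        exact hr.trans _ _ _ (hr.le_rel _ _ (Sum.LiftRel.inl h2))
          (hr.trans _ _ _ h1 (hr.le_rel _ _ (Sum.LiftRel.inr h3)))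
    · constructor
      · intro h
        obtain ⟨z, h1, h2, h3⟩ := key hr (hr.cosymm _ _ h)
        exact ⟨z, ⟨h1, hr.cosymm _ _ h1⟩, h2, h3⟩
      · rintro ⟨z, ⟨-, h1⟩, h2, h3⟩
        exact hr.trans _ _ _ (hr.le_rel _ _ (Sum.LiftRel.inr h2))
          (hr.trans _ _ _ h1 (hr.le_rel _ _ (Sum.LiftRel.inl h3)))
    · exact ⟨fun h => hr.corefl _ _ h, fun h => hr.le_rel _ _ (Sum.LiftRel.inr h)⟩
end

section
/- Let X be a compact ordered space and let r and r' be equivalence co-relations on X. Then r is contained in r' (i.e., ∀ a b, r a b → r' a b) if and only if Φ(r) ⊆ Φ(r'). Consequently, Φ and Y ↦ ≼^Y induce an isomorphism between the poset of equivalence co-relations on X (ordered by inclusion) and the poset of closed subsets of X (ordered by inclusion). -/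
lemma IsEquivCoRel.exists_mid {X : Type*} [TopologicalSpace X] [CompactSpace X]
    [PartialOrder X] [OrderClosedTopology X] {r : X ⊕ X → X ⊕ X → Prop}
    (hr : IsEquivCoRel r) {x y : X} (h : r (Sum.inl x) (Sum.inr y)) :
    ∃ z, r (Sum.inl z) (Sum.inr z) ∧ x ≤ z ∧ z ≤ y := by
  set S : Set X := {z | r (Sum.inl x) (Sum.inr z) ∧ r (Sum.inl z) (Sum.inr y)} with hS
  have hSclosed : IsClosed S := by
    have h1 : IsClosed {z : X | r (Sum.inl x) (Sum.inr z)} :=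
      hr.isClosed.preimage (f := fun z : X => ((Sum.inl x, Sum.inr z) : (X ⊕ X) × (X ⊕ X)))
        (by continuity)
    have h2 : IsClosed {z : X | r (Sum.inl z) (Sum.inr y)} :=
      hr.isClosed.preimage (f := fun z : X => ((Sum.inl z, Sum.inr y) : (X ⊕ X) × (X ⊕ X)))
        (by continuity)
    exact h1.inter h2
  -- maximal element of S via Zorn
  obtain ⟨z₀, hz₀⟩ := hr.cotrans_lr x y h
  have key : ∀ c ⊆ S, IsChain (· ≤ ·) c → ∀ a ∈ c, ∃ ub ∈ S, ∀ z ∈ c, z ≤ ub := by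
    intro c hcS hchain a hac
    haveI : Nonempty c := ⟨⟨a, hac⟩⟩
    have hdir : Directed (· ⊇ ·) (fun b : c => S ∩ Set.Ici b.1) := by
      intro b₁ b₂
      rcases hchain.total b₁.2 b₂.2 with hle | hle
      · exact ⟨b₂, Set.inter_subset_inter_right _ (Set.Ici_subset_Ici.2 hle),
          subset_refl _⟩
      · exact ⟨b₁, subset_refl _,
          Set.inter_subset_inter_right _ (Set.Ici_subset_Ici.2 hle)⟩
    have hne : ∀ b : c, (S ∩ Set.Ici b.1).Nonempty := fun b => ⟨b.1, hcS b.2, le_refl _⟩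
    have hcl : ∀ b : c, IsClosed (S ∩ Set.Ici b.1) := fun b =>
      hSclosed.inter isClosed_Ici
    have hcp : ∀ b : c, IsCompact (S ∩ Set.Ici b.1) := fun b => (hcl b).isCompact
    obtain ⟨t, ht⟩ := IsCompact.nonempty_iInter_of_directed_nonempty_isCompact_isClosed
      _ hdir hne hcp hcl
    simp only [Set.mem_iInter] at ht
    exact ⟨t, (ht ⟨a, hac⟩).1, fun z hz => (ht ⟨z, hz⟩).2⟩
  obtain ⟨m, -, hmS, hmax⟩ := zorn_le_nonempty₀ S key z₀ hz₀
  obtain ⟨w, hw1, hw2⟩ := hr.cotrans_lr m y hmS.2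
  have hmw : m ≤ w := hr.corefl _ _ hw1
  have hw0 : r (Sum.inl x) (Sum.inr w) :=
    hr.trans _ _ _ hmS.1 (hr.le_rel _ _ (Sum.LiftRel.inr hmw))
  have hwm : w = m := le_antisymm (hmax ⟨hw0, hw2⟩ hmw) hmw
  subst hwm
  exact ⟨w, hw1, hr.corefl _ _ hmS.1, hr.corefl _ _ hmS.2⟩


/-- An equivalence co-relation `r` is contained in `r'` iff `Φ(r) ⊆ Φ(r')`;
this yields the isomorphism between equivalence co-relations on `X` and closed
subsets of `X`. -/
theorem isEquivCoRel_le_iff_phi_subset {X : Type*} [TopologicalSpace X] [CompactSpace X]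
    [PartialOrder X] [OrderClosedTopology X] {r r' : X ⊕ X → X ⊕ X → Prop}
    (hr : IsEquivCoRel r) (hr' : IsEquivCoRel r') :
    (∀ a b : X ⊕ X, r a b → r' a b) ↔
      {z : X | r (Sum.inl z) (Sum.inr z) ∧ r (Sum.inr z) (Sum.inl z)} ⊆
        {z : X | r' (Sum.inl z) (Sum.inr z) ∧ r' (Sum.inr z) (Sum.inl z)} := by
  constructor
  · intro hle z hz
    exact ⟨hle _ _ hz.1, hle _ _ hz.2⟩
  · intro hsub
    have cross : ∀ x y : X, r (Sum.inl x) (Sum.inr y) → r' (Sum.inl x) (Sum.inr y) := by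
      intro x y hxy
      obtain ⟨z, hz, hxz, hzy⟩ := hr.exists_mid hxy
      have hzz' : r' (Sum.inl z) (Sum.inr z) :=
        (hsub ⟨hz, hr.cosymm _ _ hz⟩).1
      exact hr'.trans _ _ _ (hr'.le_rel _ _ (Sum.LiftRel.inl hxz))
        (hr'.trans _ _ _ hzz' (hr'.le_rel _ _ (Sum.LiftRel.inr hzy)))
    rintro (x | x) (y | y) hxy
    · exact hr'.le_rel _ _ (Sum.LiftRel.inl (hr.corefl _ _ hxy))
    · exact cross x y hxy
    · exact hr'.cosymm _ _ (cross x y (hr.cosymm _ _ hxy))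
    · exact hr'.le_rel _ _ (Sum.LiftRel.inr (hr.corefl _ _ hxy))
end

section
/- In a compact ordered space X, every nonempty directed subset D (directed with respect to ≤) has a least upper bound s, and s belongs to the topological closure of D. -/
/-- In a compact ordered space, every nonempty directed subset has a least upper
bound, which lies in the topological closure of the set. -/
theorem directedOn_exists_isLUB_mem_closure {X : Type*} [TopologicalSpace X]
    [CompactSpace X] [PartialOrder X] [OrderClosedTopology X] {D : Set X}
    (hD : DirectedOn (· ≤ ·) D) (hne : D.Nonempty) :
    ∃ s : X, IsLUB D s ∧ s ∈ closure D := by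
  classical
  haveI : Nonempty D := hne.to_subtype
  haveI : Nonempty X := ⟨hne.choose⟩
  let F : Filter X := ⨅ a : D, Filter.principal (D ∩ Set.Ici (a : X))
  have hdir : Directed (· ≥ ·) fun a : D => Filter.principal (D ∩ Set.Ici (a : X)) := by
    rintro ⟨a, ha⟩ ⟨b, hb⟩
    obtain ⟨c, hc, hac, hbc⟩ := hD a ha b hb
    refine ⟨⟨c, hc⟩, Filter.principal_mono.2 ?_, Filter.principal_mono.2 ?_⟩
    · exact fun x hx => ⟨hx.1, le_trans hac hx.2⟩
    · exact fun x hx => ⟨hx.1, le_trans hbc hx.2⟩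
  haveI : F.NeBot := Filter.iInf_neBot_of_directed hdir fun a =>
    Filter.principal_neBot_iff.2 ⟨a, a.2, le_refl _⟩
  obtain ⟨s, hs⟩ := exists_clusterPt_of_compactSpace F
  have hmem : ∀ a : D, D ∩ Set.Ici (a : X) ∈ F := fun a =>
    Filter.mem_iInf_of_mem a (Filter.mem_principal_self _)
  have hclo : ∀ a : D, s ∈ closure (D ∩ Set.Ici (a : X)) := fun a =>
    mem_closure_iff_clusterPt.2 (hs.mono (Filter.le_principal_iff.2 (hmem a)))
  have hsD : s ∈ closure D := by
    obtain ⟨a, ha⟩ := hne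
    exact closure_mono Set.inter_subset_left (hclo ⟨a, ha⟩)
  refine ⟨s, ⟨?_, ?_⟩, hsD⟩
  · intro a ha
    have : s ∈ closure (Set.Ici a) :=
      closure_mono Set.inter_subset_right (hclo ⟨a, ha⟩)
    rwa [IsClosed.closure_eq isClosed_Ici] at this
  · intro b hb
    have : closure D ⊆ Set.Iic b := by
      rw [← IsClosed.closure_eq isClosed_Iic]
      exact closure_mono hb
    exact this hsD
end

section
/- Let X be a compact ordered space, let r be an equivalence co-relation on X, and suppose r (Sum.inl x) (Sum.inr y) holds. Then the set Ω = {u : X | r (Sum.inl x) (Sum.inr u) ∧ r (Sum.inl u) (Sum.inr y)} is nonempty and has a maximal element with respect to the order ≤ of X. -/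
/-- The set `Ω` is nonempty and has a maximal element. -/
theorem omega_nonempty_and_has_maximal {X : Type*} [TopologicalSpace X] [CompactSpace X]
    [PartialOrder X] [OrderClosedTopology X] {r : X ⊕ X → X ⊕ X → Prop}
    (hr : IsEquivCoRel r) {x y : X} (hxy : r (Sum.inl x) (Sum.inr y)) :
    {u : X | r (Sum.inl x) (Sum.inr u) ∧ r (Sum.inl u) (Sum.inr y)}.Nonempty ∧
      ∃ m ∈ {u : X | r (Sum.inl x) (Sum.inr u) ∧ r (Sum.inl u) (Sum.inr y)},
        ∀ u ∈ {u : X | r (Sum.inl x) (Sum.inr u) ∧ r (Sum.inl u) (Sum.inr y)},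
          m ≤ u → u = m := by
  set Ω : Set X := {u : X | r (Sum.inl x) (Sum.inr u) ∧ r (Sum.inl u) (Sum.inr y)} with hΩ
  have hne : Ω.Nonempty := by
    obtain ⟨z, hz1, hz2⟩ := hr.cotrans_lr x y hxy
    exact ⟨z, hz1, hz2⟩
  have hclosed : IsClosed Ω := by
    have h1 : IsClosed {u : X | r (Sum.inl x) (Sum.inr u)} := by
      have : Continuous fun u : X => ((Sum.inl x, Sum.inr u) : (X ⊕ X) × (X ⊕ X)) :=
        continuous_const.prodMk (continuous_inr)
      exact hr.isClosed.preimage this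
    have h2 : IsClosed {u : X | r (Sum.inl u) (Sum.inr y)} := by
      have : Continuous fun u : X => ((Sum.inl u, Sum.inr y) : (X ⊕ X) × (X ⊕ X)) :=
        continuous_inl.prodMk continuous_const
      exact hr.isClosed.preimage this
    exact h1.inter h2
  refine ⟨hne, ?_⟩
  have hchain : ∀ c ⊆ Ω, IsChain (· ≤ ·) c → ∃ ub ∈ Ω, ∀ z ∈ c, z ≤ ub := by
    intro c hcΩ hc
    rcases c.eq_empty_or_nonempty with rfl | hcne
    · exact ⟨hne.some, hne.some_mem, by simp⟩
    · have : Nonempty c := hcne.to_subtype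
      have key : (⋂ a : c, (Ω ∩ Set.Ici (a : X))).Nonempty := by
        apply IsCompact.nonempty_iInter_of_directed_nonempty_isCompact_isClosed
        · rintro ⟨a, ha⟩ ⟨b, hb⟩
          rcases hc.total ha hb with hab | hba
          · exact ⟨⟨b, hb⟩, Set.inter_subset_inter_right _ (Set.Ici_subset_Ici.2 hab),
              le_refl _⟩
          · exact ⟨⟨a, ha⟩, le_refl _,
              Set.inter_subset_inter_right _ (Set.Ici_subset_Ici.2 hba)⟩
        · exact fun a => ⟨a, hcΩ a.2, le_refl _⟩
        · exact fun a => (hclosed.inter isClosed_Ici).isCompact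
        · exact fun a => hclosed.inter isClosed_Ici
      obtain ⟨ub, hub⟩ := key
      simp only [Set.mem_iInter, Set.mem_inter_iff, Set.mem_Ici] at hub
      exact ⟨ub, (hub ⟨hcne.some, hcne.some_mem⟩).1, fun z hz => (hub ⟨z, hz⟩).2⟩
  obtain ⟨m, hm⟩ := zorn_le₀ Ω hchain
  exact ⟨m, hm.1, fun u hu hmu => le_antisymm (hm.2 hu hmu) hmu⟩
end

section
/- Let X, Y₁, Y₂ be compact ordered spaces, let f₁ : X → Y₁ be a continuous monotone surjection, and let f₂ : X → Y₂ be a continuous monotone map. Then there exists a continuous monotone map g : Y₁ → Y₂ with g ∘ f₁ = f₂ if and only if for all x, y ∈ X, f₁ x ≤ f₁ y implies f₂ x ≤ f₂ y. -/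
/-!
A continuous surjection from a compact space onto a Hausdorff space (a compact pospace is
Hausdorff) is a quotient map. Applied to `f₁ x = f₁ y` in both directions, the order condition
makes `f₂` constant on the fibres of `f₁`, so `f₂` descends to a continuous map on `Y₁`, which
is monotone by the condition itself.
-/

open Function Topology

section Factor

variable {X α β : Type*} {f : X → α} {g : X → β}

theorem factorsThrough_of_le_imp_le [Preorder α] [PartialOrder β]
    (h : ∀ x y, f x ≤ f y → g x ≤ g y) : g.FactorsThrough f :=
  fun x y hxy ↦ le_antisymm (h x y hxy.le) (h y x hxy.ge)

theorem comp_surjInv_comp_of_factorsThrough (hs : Surjective f) (h : g.FactorsThrough f) :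
    (g ∘ surjInv hs) ∘ f = g :=
  funext fun x ↦ h (surjInv_eq hs (f x))

theorem monotone_comp_surjInv_of_le_imp_le [Preorder α] [Preorder β] (hs : Surjective f)
    (h : ∀ x y, f x ≤ f y → g x ≤ g y) : Monotone (g ∘ surjInv hs) := fun a b hab ↦
  h _ _ (by rwa [surjInv_eq hs a, surjInv_eq hs b])

theorem Topology.IsQuotientMap.exists_continuous_monotone_factor [TopologicalSpace X]
    [TopologicalSpace α] [TopologicalSpace β] [Preorder α] [PartialOrder β]
    (hq : IsQuotientMap f) (hg : Continuous g) (h : ∀ x y, f x ≤ f y → g x ≤ g y) :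
    ∃ e : α → β, Continuous e ∧ Monotone e ∧ e ∘ f = g := by
  have hfac := comp_surjInv_comp_of_factorsThrough hq.surjective (factorsThrough_of_le_imp_le h)
  refine ⟨g ∘ surjInv hq.surjective, ?_, monotone_comp_surjInv_of_le_imp_le _ h, hfac⟩
  exact hq.continuous_iff.mpr (by rwa [hfac])

end Factor

theorem exists_factor_iff_general {X Y₁ Y₂ : Type*}
    [TopologicalSpace X] [CompactSpace X]
    [TopologicalSpace Y₁] [PartialOrder Y₁] [OrderClosedTopology Y₁]
    [TopologicalSpace Y₂] [PartialOrder Y₂]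
    {f₁ : X → Y₁} (hf₁c : Continuous f₁)
    (hf₁s : Function.Surjective f₁)
    {f₂ : X → Y₂} (hf₂c : Continuous f₂) :
    (∃ g : Y₁ → Y₂, Continuous g ∧ Monotone g ∧ g ∘ f₁ = f₂) ↔
      ∀ x y : X, f₁ x ≤ f₁ y → f₂ x ≤ f₂ y := by
  constructor
  · rintro ⟨g, -, hgm, rfl⟩ x y h
    exact hgm h
  · exact (IsQuotientMap.of_surjective_continuous hf₁s hf₁c).exists_continuous_monotone_factor hf₂c

/-- Given a continuous monotone surjection `f₁ : X ↠ Y₁` and a continuous monotone map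
`f₂ : X → Y₂` between compact ordered spaces, `f₂` factors through `f₁` via a continuous
monotone map iff `f₁ x ≤ f₁ y` implies `f₂ x ≤ f₂ y`. -/
theorem exists_factor_iff {X Y₁ Y₂ : Type*}
    [TopologicalSpace X] [CompactSpace X] [PartialOrder X] [OrderClosedTopology X]
    [TopologicalSpace Y₁] [CompactSpace Y₁] [PartialOrder Y₁] [OrderClosedTopology Y₁]
    [TopologicalSpace Y₂] [CompactSpace Y₂] [PartialOrder Y₂] [OrderClosedTopology Y₂]
    {f₁ : X → Y₁} (hf₁c : Continuous f₁) (hf₁m : Monotone f₁)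
    (hf₁s : Function.Surjective f₁)
    {f₂ : X → Y₂} (hf₂c : Continuous f₂) (hf₂m : Monotone f₂) :
    (∃ g : Y₁ → Y₂, Continuous g ∧ Monotone g ∧ g ∘ f₁ = f₂) ↔
      ∀ x y : X, f₁ x ≤ f₁ y → f₂ x ≤ f₂ y :=
  exists_factor_iff_general hf₁c hf₁s hf₂c
end

section
/- Let X be a compact Hausdorff space equipped with a preorder ≼ whose graph is closed in X × X. Let ∼ be the symmetrization of ≼ (x ∼ y iff x ≼ y and y ≼ x), and consider the antisymmetrization quotient Q = X/∼ with the quotient topology and the induced partial order ([x] ≤ [y] iff x ≼ y). Then Q is compact, the graph of the induced partial order on Q is closed in Q × Q (so Q is a compact ordered space), and the quotient map X → Q is a continuous monotone surjection satisfying: for all x, y ∈ X, [x] ≤ [y] in Q if and only if x ≼ y. -/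
/-- The antisymmetrization quotient of a preordered compact Hausdorff space (with
closed preorder), equipped with the quotient topology, is a compact ordered space,
and the quotient map is a continuous monotone surjection reflecting the order. -/
theorem antisymmetrization_compactPospace {X : Type*} [TopologicalSpace X]
    [CompactSpace X] [T2Space X] [Preorder X]
    (hclosed : IsClosed {p : X × X | p.1 ≤ p.2}) :
    letI : TopologicalSpace (Antisymmetrization X (· ≤ ·)) :=
      TopologicalSpace.coinduced (toAntisymmetrization (· ≤ ·)) inferInstance
    CompactSpace (Antisymmetrization X (· ≤ ·)) ∧
      IsClosed {p : Antisymmetrization X (· ≤ ·) × Antisymmetrization X (· ≤ ·) |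
        p.1 ≤ p.2} ∧
      Continuous (toAntisymmetrization (· ≤ ·) : X → Antisymmetrization X (· ≤ ·)) ∧
      Monotone (toAntisymmetrization (· ≤ ·) : X → Antisymmetrization X (· ≤ ·)) ∧
      Function.Surjective
        (toAntisymmetrization (· ≤ ·) : X → Antisymmetrization X (· ≤ ·)) ∧
      ∀ x y : X,
        toAntisymmetrization ((· ≤ ·) : X → X → Prop) x ≤
            toAntisymmetrization ((· ≤ ·) : X → X → Prop) y ↔ x ≤ y := by
  letI : TopologicalSpace (Antisymmetrization X (· ≤ ·)) :=
    TopologicalSpace.coinduced (toAntisymmetrization (· ≤ ·)) inferInstance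
  set q : X → Antisymmetrization X (· ≤ ·) := toAntisymmetrization (· ≤ ·) with hq
  have hcont : Continuous q := continuous_coinduced_rng
  have hsurj : Function.Surjective q := fun a =>
    ⟨ofAntisymmetrization _ a, toAntisymmetrization_ofAntisymmetrization _ a⟩
  have hiff : ∀ x y : X, q x ≤ q y ↔ x ≤ y := fun x y =>
    toAntisymmetrization_le_toAntisymmetrization_iff
  -- q is a closed map
  have hclosedmap : IsClosedMap q := by
    intro C hC
    rw [← isOpen_compl_iff, isOpen_coinduced, Set.preimage_compl, isOpen_compl_iff]
    have hpre : q ⁻¹' (q '' C) =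
        Prod.fst '' {p : X × X | p.2 ∈ C ∧ p.1 ≤ p.2 ∧ p.2 ≤ p.1} := by
      ext x
      constructor
      · rintro ⟨c, hc, hqc⟩
        have h1 : q x ≤ q c := hqc ▸ le_refl _
        have h2 : q c ≤ q x := hqc ▸ le_refl _
        exact ⟨(x, c), ⟨hc, (hiff x c).mp h1, (hiff c x).mp h2⟩, rfl⟩
      · rintro ⟨⟨x', c⟩, ⟨hc, h1, h2⟩, rfl⟩
        exact ⟨c, hc, le_antisymm ((hiff c x').mpr h2) ((hiff x' c).mpr h1)⟩
    rw [hpre]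
    have hKclosed : IsClosed {p : X × X | p.2 ∈ C ∧ p.1 ≤ p.2 ∧ p.2 ≤ p.1} := by
      refine IsClosed.inter (hC.preimage continuous_snd) (IsClosed.inter hclosed ?_)
      exact hclosed.preimage (continuous_snd.prodMk continuous_fst)
    exact ((hKclosed.isCompact).image continuous_fst).isClosed
  -- q is proper
  have hproper : IsProperMap q := by
    rw [isProperMap_iff_isClosedMap_and_compact_fibers]
    refine ⟨hcont, hclosedmap, fun a => ?_⟩
    obtain ⟨x, rfl⟩ := hsurj a
    have : q ⁻¹' {q x} = {y : X | y ≤ x} ∩ {y : X | x ≤ y} := by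
      ext y
      simp only [Set.mem_preimage, Set.mem_singleton_iff, Set.mem_inter_iff, Set.mem_setOf_eq]
      constructor
      · intro h
        exact ⟨(hiff y x).mp (h ▸ le_refl _), (hiff x y).mp (h ▸ le_refl _)⟩
      · intro ⟨h1, h2⟩
        exact le_antisymm ((hiff y x).mpr h1) ((hiff x y).mpr h2)
    rw [this]
    refine IsClosed.isCompact (IsClosed.inter ?_ ?_)
    · exact hclosed.preimage (continuous_id.prodMk continuous_const)
    · exact hclosed.preimage (continuous_const.prodMk continuous_id)
  -- graph of ≤ on the quotient is the image of the graph on X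
  have hgraph : {p : Antisymmetrization X (· ≤ ·) × Antisymmetrization X (· ≤ ·) | p.1 ≤ p.2}
      = Prod.map q q '' {p : X × X | p.1 ≤ p.2} := by
    ext ⟨a, b⟩
    constructor
    · intro hab
      obtain ⟨x, rfl⟩ := hsurj a
      obtain ⟨y, rfl⟩ := hsurj b
      exact ⟨(x, y), (hiff x y).mp hab, rfl⟩
    · rintro ⟨⟨x, y⟩, hxy, h⟩
      obtain ⟨h1, h2⟩ := Prod.mk.injEq _ _ _ _ ▸ h
      exact h1 ▸ h2 ▸ (hiff x y).mpr hxy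
  have hcompact : CompactSpace (Antisymmetrization X (· ≤ ·)) := by
    constructor
    rw [← Set.range_eq_univ.mpr hsurj]
    exact isCompact_range hcont
  refine ⟨hcompact, ?_, hcont, fun x y h => (hiff x y).mpr h, hsurj, hiff⟩
  rw [hgraph]
  exact (hproper.prodMap hproper).isClosedMap _ hclosed
end

section
/- Let X be a compact ordered space and let x, y ∈ X with ¬(x ≤ y). Then there exists a continuous monotone function f : X → [0,1] (the unit interval with its usual order and topology) such that f x = 1 and f y = 0. -/
/-!
Run Urysohn's construction (`Urysohns.CU`) with open lower sets only. The interpolation step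
needs: if `c` is closed and `u` is an open lower set containing it, some open lower `v` has
`c ⊆ v` and `closure v ⊆ u`. In a compact pospace the lower and upper closures of closed sets
are closed, and the tube lemma applied to `uᶜ × ↓c`, which misses the graph of `≤`, provides `v`.
Since every outer set of the construction is lower, all approximants, hence their limit, are
monotone. Starting from `C = ↓y` and `U = (↑x)ᶜ` gives the separating function.
-/

open Set

section CompactPospace

variable {X : Type*} [TopologicalSpace X] [Preorder X] [OrderClosedTopology X]

theorem IsCompact.isClosed_upperClosure {s : Set X} (hs : IsCompact s) :
    IsClosed (upperClosure s : Set X) := by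
  have : CompactSpace s := isCompact_iff_compactSpace.1 hs
  have hgraph : IsClosed {p : X × s | (p.2 : X) ≤ p.1} :=
    isClosed_le (continuous_subtype_val.comp continuous_snd) continuous_fst
  convert isClosedMap_fst_of_compactSpace _ hgraph using 1
  ext z
  simp [mem_upperClosure]

theorem IsCompact.isClosed_lowerClosure {s : Set X} (hs : IsCompact s) :
    IsClosed (lowerClosure s : Set X) :=
  IsCompact.isClosed_upperClosure (X := Xᵒᵈ) hs

theorem exists_isOpen_isLowerSet_closure_subset [CompactSpace X] {c u : Set X}
    (hc : IsClosed c) (hu : IsOpen u) (hul : IsLowerSet u) (hcu : c ⊆ u) :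
    ∃ v, IsOpen v ∧ IsLowerSet v ∧ c ⊆ v ∧ closure v ⊆ u := by
  set K : Set X := ↑(lowerClosure c)
  have hKu : K ⊆ u := fun z ⟨w, hw, hzw⟩ => hul hzw (hcu hw)
  have hsep : uᶜ ×ˢ K ⊆ {p : X × X | p.1 ≤ p.2}ᶜ :=
    fun p ⟨hp₁, hp₂⟩ hle => hp₁ (hul hle (hKu hp₂))
  obtain ⟨M, N, hM, hN, huM, hKN, hMN⟩ := generalized_tube_lemma hu.isClosed_compl.isCompact
    hc.isCompact.isClosed_lowerClosure.isCompact isClosed_le_prod.isOpen_compl hsep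
  -- the points whose whole lower closure lies in `N`
  set v : Set X := (↑(upperClosure Nᶜ))ᶜ
  have hv : IsOpen v := hN.isClosed_compl.isCompact.isClosed_upperClosure.isOpen_compl
  have hcv : c ⊆ v := fun z hz ⟨w, hwN, hwz⟩ => hwN (hKN ⟨z, hz, hwz⟩)
  have hvM : v ⊆ Mᶜ := fun z hz hzM =>
    hMN (mk_mem_prod hzM (not_not.1 fun hzN => hz (subset_upperClosure hzN))) le_rfl
  exact ⟨v, hv, (upperClosure Nᶜ).upper.compl, hcv,
    (closure_minimal hvM hM.isClosed_compl).trans (compl_subset_comm.1 huM)⟩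

end CompactPospace

namespace Urysohns.CU

variable {X : Type*} [TopologicalSpace X] [Preorder X] {P : Set X → Set X → Prop}

theorem monotone_approx (hP : ∀ s t, P s t → IsLowerSet t) (n : ℕ) (c : CU P) :
    Monotone (c.approx n) := by
  induction n generalizing c with
  | zero =>
    intro a b hab
    by_cases ha : a ∈ c.Uᶜ
    · have hb : b ∈ c.Uᶜ := (hP _ _ c.P_C_U).compl hab ha
      simp only [approx, indicator_of_mem ha, indicator_of_mem hb, Pi.one_apply, le_refl]
    · simp only [approx, indicator_of_notMem ha]
      exact indicator_nonneg (fun _ _ => zero_le_one) _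
  | succ n ih => exact fun a b hab => midpoint_le_midpoint (ih c.left hab) (ih c.right hab)

theorem monotone_lim (hP : ∀ s t, P s t → IsLowerSet t) (c : CU P) : Monotone c.lim :=
  fun _ b hab => ciSup_mono (c.bddAbove_range_approx b) fun n => c.monotone_approx hP n hab

end Urysohns.CU

/-- Nachbin's order-separation theorem: if `¬ x ≤ y` in a compact ordered space, then
some continuous monotone `f : X → [0,1]` has `f x = 1` and `f y = 0`. -/
theorem nachbin_separation {X : Type*} [TopologicalSpace X] [CompactSpace X]
    [PartialOrder X] [OrderClosedTopology X] {x y : X} (h : ¬ x ≤ y) :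
    ∃ f : X → unitInterval, Continuous f ∧ Monotone f ∧ f x = 1 ∧ f y = 0 := by
  let c : Urysohns.CU fun (_ u : Set X) => IsLowerSet u :=
    { C := Iic y
      U := (Ici x)ᶜ
      P_C_U := (isUpperSet_Ici x).compl
      closed_C := isClosed_Iic
      open_U := isClosed_Ici.isOpen_compl
      subset := fun _ hzy hxz => h (le_trans hxz hzy)
      hP := fun hc hul hu hcu => by
        obtain ⟨v, hv, hvl, hcv, hvu⟩ := exists_isOpen_isLowerSet_closure_subset hc hu hul hcu
        exact ⟨v, hv, hcv, hvu, hvl, hul⟩ }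
  refine ⟨fun z => ⟨c.lim z, c.lim_mem_Icc z⟩, c.continuous_lim.subtype_mk _,
    fun _ _ hab => c.monotone_lim (fun _ _ => id) hab, ?_, ?_⟩
  · exact Subtype.ext (c.lim_of_notMem_U x (not_not.2 le_rfl))
  · exact Subtype.ext (c.lim_of_mem_C y le_rfl)
end

section
/- Let X be a compact topological space, let Y and Z be compact ordered spaces, and let g : X → Y and h : X → Z be continuous maps. Then the set {(w, w') : Y × Z | ∃ x : X, w ≤ g x ∧ h x ≤ w'} is closed in Y × Z with the product topology. -/
/-- The key closedness step for pushout preorders: given continuous maps `g : X → Y`,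
`h : X → Z` from a compact space to compact ordered spaces, the set
`{(w, w') | ∃ x, w ≤ g x ∧ h x ≤ w'}` is closed in `Y × Z`. -/
theorem isClosed_pushout_rel {X Y Z : Type*} [TopologicalSpace X] [CompactSpace X]
    [TopologicalSpace Y] [CompactSpace Y] [PartialOrder Y] [OrderClosedTopology Y]
    [TopologicalSpace Z] [CompactSpace Z] [PartialOrder Z] [OrderClosedTopology Z]
    {g : X → Y} (hg : Continuous g) {h : X → Z} (hh : Continuous h) :
    IsClosed {p : Y × Z | ∃ x : X, p.1 ≤ g x ∧ h x ≤ p.2} := by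
  have hS : IsClosed {q : X × (Y × Z) | q.2.1 ≤ g q.1 ∧ h q.1 ≤ q.2.2} := by
    apply IsClosed.inter
    · exact isClosed_le (by fun_prop) (by fun_prop)
    · exact isClosed_le (by fun_prop) (by fun_prop)
  have := isClosedMap_snd_of_compactSpace (X := X) _ hS
  convert this using 1
  ext p
  simp [Prod.ext_iff]
end

section
/- Let I be any index set and let f : (I → [0,1]) → [0,1] be a function that is continuous with respect to the product topology and monotone with respect to the pointwise order. Then there exists a countable subset J ⊆ I such that f factors through the projection onto the J-coordinates: for all x, y : I → [0,1], if x j = y j for every j ∈ J, then f x = f y. -/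
open Filter in
theorem aux_finite_support {I : Type*}
    {f : (I → unitInterval) → unitInterval} (hfc : Continuous f) :
    ∀ ε > (0:ℝ), ∃ F : Set I, F.Finite ∧
      ∀ x y : I → unitInterval, (∀ i ∈ F, x i = y i) → dist (f x) (f y) < ε := by
  intro ε hε
  have huc : UniformContinuous f := CompactSpace.uniformContinuous_of_continuous hfc
  have hU : {p : unitInterval × unitInterval | dist p.1 p.2 < ε} ∈ uniformity unitInterval :=
    Metric.dist_mem_uniformity hε
  have h2 := huc hU
  rw [Pi.uniformity, Filter.mem_map, Filter.mem_iInf] at h2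
  obtain ⟨F, hF, V, hV, hEq⟩ := h2
  refine ⟨F, hF, fun x y hxy => ?_⟩
  have hmem : (x, y) ∈ (fun p : (I → unitInterval) × (I → unitInterval) => (f p.1, f p.2)) ⁻¹' {p : unitInterval × unitInterval | dist p.1 p.2 < ε} := by
    rw [hEq, Set.mem_iInter]
    intro i
    obtain ⟨t, ht, hsub⟩ := Filter.mem_comap.mp (hV i)
    apply hsub
    simp only [Set.mem_preimage]
    rw [hxy i i.2]
    exact refl_mem_uniformity ht
  exact hmem

/-- Every continuous monotone function `[0,1]^I → [0,1]` factors through countably many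
coordinates. -/
theorem continuous_monotone_countable_support {I : Type*}
    {f : (I → unitInterval) → unitInterval} (hfc : Continuous f) (hfm : Monotone f) :
    ∃ J : Set I, J.Countable ∧
      ∀ x y : I → unitInterval, (∀ j ∈ J, x j = y j) → f x = f y := by
  have key := aux_finite_support hfc
  have pos : ∀ n : ℕ, (0:ℝ) < 1 / (n + 1) := fun n => by positivity
  choose F hFfin hFspec using fun n : ℕ => key (1 / (n + 1)) (pos n)
  refine ⟨⋃ n, F n, Set.countable_iUnion (fun n => (hFfin n).countable), fun x y hxy => ?_⟩
  have hd : ∀ n : ℕ, dist (f x) (f y) < 1 / (n + 1) := fun n =>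
    hFspec n x y fun i hi => hxy i (Set.mem_iUnion.mpr ⟨n, hi⟩)
  have : dist (f x) (f y) = 0 := by
    by_contra h
    have h0 : 0 < dist (f x) (f y) := lt_of_le_of_ne dist_nonneg (Ne.symm h)
    obtain ⟨n, hn⟩ := exists_nat_one_div_lt h0
    exact absurd (hd n) (not_lt.mpr hn.le)
  exact eq_of_dist_eq_zero this
end
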